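/- arXiv:1809.06580 — 3 statements merged into one kernel-verified Lean document; each statement's English description precedes it below -/
import Mathlib

section
/- Fix E > 0, δ > 3 and s with 1/2 < s < (δ−2)/2. There exists m₀ > 2, depending only on δ and s, such that for every m ≥ m₀ the following holds: given any constant C > 0 (independent of r, h, τ and a), there exist τ₀ = τ₀(C) > 0 and h₀ = h₀(C) > 0 such that for τ = τ₀ h^{−1/3}, all 0 < h ≤ h₀, and all r > 0 with r ≠ a, one has A(r) − C B(r) ≥ −(E/2) μ'(r). -/
open Real

/-- The weight function `μ` of Section 2 (with parameters `s` and `a = h^{-m}`). -/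
noncomputable def muF (s a r : ℝ) : ℝ :=
  if r ≤ a then (r + 1) ^ 2 - 1
  else (a + 1) ^ 2 - 1 + (a + 1) ^ (-(2 * s) + 1) - (r + 1) ^ (-(2 * s) + 1)

/-- The derivative `μ'` of the weight function (away from `r = a`). -/
noncomputable def muD (s a r : ℝ) : ℝ :=
  if r < a then 2 * (r + 1) else (2 * s - 1) * (r + 1) ^ (-(2 * s))

/-- The derivative `φ'` of the phase function (with parameters `τ` and `a`). -/
noncomputable def phiD (τ a r : ℝ) : ℝ :=
  if r ≤ a then τ * ((r + 1)⁻¹ - (a + 1)⁻¹) else 0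

/-- The second derivative `φ''` of the phase function (away from `r = a`). -/
noncomputable def phiDD (τ a r : ℝ) : ℝ :=
  if r < a then -τ * (r + 1) ^ (-(2 : ℝ)) else 0

/-- The phase function `φ(r) = ∫₀^r φ'(t) dt`. -/
noncomputable def phiF (τ a r : ℝ) : ℝ := ∫ t in (0 : ℝ)..r, phiD τ a t

/-- `A(r) = (μ φ'²)'(r)`. -/
noncomputable def AF (s τ a r : ℝ) : ℝ :=
  deriv (fun t => muF s a t * (phiD τ a t) ^ 2) r

/-- `B(r) = (μ(r)(h^{-1}(r+1)^{-δ} + |φ''(r)|))² / (h^{-1} φ'(r) μ(r) + μ'(r))`. -/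
noncomputable def BF (δ s h τ a r : ℝ) : ℝ :=
  (muF s a r * (h⁻¹ * (r + 1) ^ (-δ) + |phiDD τ a r|)) ^ 2 /
    (h⁻¹ * phiD τ a r * muF s a r + muD s a r)

open Filter Topology

/-!
For `r > a` the phase is flat, so `A = 0`, and `μ ≤ (a + 1)²` together with
`(r + 1)^{-2δ} ≤ (a + 1)^{4s - 2δ} (r + 1)^{-4s}` gives
`C B ≤ C h⁻² (a + 1)^{-2(δ - 2 - 2s)} μ' / (2s - 1)²`; for `a = h^{-m}` the prefactor is
`O(h^{2m(δ - 2 - 2s) - 2})`, small once `m (δ - 2 - 2s) > 1`.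

For `r < a`, with `x = r + 1` and `c = (a + 1)⁻¹`, we have `A = 2τ²(x⁻¹ - c)(x⁻² - c x)`;
split `B` by `(p + q)² ≤ 2p² + 2q²` into its `h⁻¹ x^{-δ}` part and its `φ''` part and keep
only one summand of the denominator. Where `c x³ ≤ 1/2`, `A ≥ τ² x⁻³ / 2` absorbs the first
part because `τ³ ≥ 16 C h⁻¹`, and the second is `O(C τ h)`. Where `c x³ > 1/2`, `x⁻¹` is
`O(c^{1/3})`, and `A ≥ -2τ²c` and both parts are bounded by positive powers of `h` once
`τ = τ₀ h^{-1/3}` and `c ≤ h^m` with `m > 2`. Hence `A - C B ≥ -E ≥ -(E/2) μ'`.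
-/

/-- `A` and `B` on `0 < r < a`, written in `x = r + 1`, `c = (a + 1)⁻¹` and `w = x ^ (-δ)`. -/
noncomputable def innerA (τ c x : ℝ) : ℝ := 2 * τ ^ 2 * (x⁻¹ - c) * ((x ^ 2)⁻¹ - c * x)

noncomputable def innerDenom (h τ c x : ℝ) : ℝ := h⁻¹ * (τ * (x⁻¹ - c)) * (x ^ 2 - 1) + 2 * x

noncomputable def innerB (h τ c w x : ℝ) : ℝ :=
  ((x ^ 2 - 1) * (h⁻¹ * w + τ * (x ^ 2)⁻¹)) ^ 2 / innerDenom h τ c x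

theorem inv_div_two_le_inv_sub {x c : ℝ} (hx : 1 ≤ x) (hc : 0 ≤ c) (hcx : c * x ^ 3 ≤ 1 / 2) :
    x⁻¹ / 2 ≤ x⁻¹ - c := by
  have hcx' : c * x ≤ 1 / 2 := le_trans (by gcongr; exact le_self_pow₀ hx (by norm_num)) hcx
  have : c = c * x * x⁻¹ := by field_simp
  nlinarith [inv_pos.2 (zero_lt_one.trans_le hx)]

theorem innerA_ge_of_mul_pow_three_le {x c τ : ℝ} (hx : 1 ≤ x) (hc : 0 ≤ c)
    (hcx : c * x ^ 3 ≤ 1 / 2) : τ ^ 2 * (x ^ 3)⁻¹ / 2 ≤ innerA τ c x := by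
  have hx0 : 0 < x := by linarith
  have hu := inv_div_two_le_inv_sub hx hc hcx
  have hv : (x ^ 2)⁻¹ / 2 ≤ (x ^ 2)⁻¹ - c * x := by
    have : c * x = c * x ^ 3 * (x ^ 2)⁻¹ := by field_simp
    nlinarith [inv_pos.2 (pow_pos hx0 2)]
  calc τ ^ 2 * (x ^ 3)⁻¹ / 2 = 2 * τ ^ 2 * (x⁻¹ / 2) * ((x ^ 2)⁻¹ / 2) := by field_simp
    _ ≤ innerA τ c x := by
      unfold innerA
      gcongr
      exact mul_nonneg (by positivity) (le_trans (by positivity) hu)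

theorem neg_le_innerA {x c τ : ℝ} (hx : 0 < x) (hcx : c ≤ x⁻¹) :
    -(2 * τ ^ 2 * c) ≤ innerA τ c x := by
  have hsum : innerA τ c x + 2 * τ ^ 2 * c
      = 2 * τ ^ 2 * ((x⁻¹ - c) * (x ^ 2)⁻¹ + c ^ 2 * x) := by
    unfold innerA; field_simp; ring
  have : 0 ≤ (x⁻¹ - c) * (x ^ 2)⁻¹ + c ^ 2 * x := by
    have := sub_nonneg.2 hcx
    positivity
  nlinarith [sq_nonneg τ]

theorem sq_mul_div_le {μ M K D z : ℝ} (hμ : 0 ≤ μ) (hμM : μ ≤ M) (hK : 0 < K)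
    (hD : K * μ ≤ D) : (μ * z) ^ 2 / D ≤ M * z ^ 2 / K := by
  rcases hμ.eq_or_lt with rfl | hμ
  · simp only [zero_mul, ne_eq, OfNat.ofNat_ne_zero, not_false_eq_true, zero_pow, zero_div]
    positivity
  calc (μ * z) ^ 2 / D ≤ (μ * z) ^ 2 / (K * μ) :=
        div_le_div_of_nonneg_left (sq_nonneg _) (by positivity) hD
    _ = μ * z ^ 2 / K := by field_simp
    _ ≤ M * z ^ 2 / K := by gcongr

theorem mul_le_innerDenom_of_mul_pow_three_le {x c h τ : ℝ} (hx : 1 ≤ x) (hc : 0 ≤ c)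
    (hcx : c * x ^ 3 ≤ 1 / 2) (hh : 0 < h) (hτ : 0 < τ) :
    h⁻¹ * τ * x⁻¹ / 2 * (x ^ 2 - 1) ≤ innerDenom h τ c x := by
  have hμ : 0 ≤ x ^ 2 - 1 := by nlinarith
  calc h⁻¹ * τ * x⁻¹ / 2 * (x ^ 2 - 1) = h⁻¹ * (τ * (x⁻¹ / 2)) * (x ^ 2 - 1) := by ring
    _ ≤ h⁻¹ * (τ * (x⁻¹ - c)) * (x ^ 2 - 1) := by
      gcongr; exact inv_div_two_le_inv_sub hx hc hcx
    _ ≤ innerDenom h τ c x := by unfold innerDenom; linarith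

theorem two_div_mul_le_innerDenom {x c h τ : ℝ} (hx : 1 < x) (hcx : c < x⁻¹) (hh : 0 < h)
    (hτ : 0 < τ) : 2 / x * (x ^ 2 - 1) ≤ innerDenom h τ c x := by
  have : 0 ≤ h⁻¹ * (τ * (x⁻¹ - c)) * (x ^ 2 - 1) := by
    have := sub_pos.2 hcx
    have : 0 ≤ x ^ 2 - 1 := by nlinarith
    positivity
  calc 2 / x * (x ^ 2 - 1) ≤ 2 / x * x ^ 2 := by gcongr; linarith
    _ = 2 * x := by field_simp
    _ ≤ innerDenom h τ c x := by unfold innerDenom; linarith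

theorem mul_innerB_le {x c h τ w C : ℝ} (hC : 0 ≤ C) (hD : 0 ≤ innerDenom h τ c x) :
    C * innerB h τ c w x ≤
      2 * C * (((x ^ 2 - 1) * (h⁻¹ * w)) ^ 2 / innerDenom h τ c x) +
        2 * C * (((x ^ 2 - 1) * (τ * (x ^ 2)⁻¹)) ^ 2 / innerDenom h τ c x) := by
  have := add_sq_le (a := (x ^ 2 - 1) * (h⁻¹ * w)) (b := (x ^ 2 - 1) * (τ * (x ^ 2)⁻¹))
  rw [← mul_add] at this
  calc C * innerB h τ c w x
      ≤ C * (2 * (((x ^ 2 - 1) * (h⁻¹ * w)) ^ 2 + ((x ^ 2 - 1) * (τ * (x ^ 2)⁻¹)) ^ 2) /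
          innerDenom h τ c x) := by unfold innerB; gcongr
    _ = _ := by ring

theorem neg_le_innerA_sub_innerB_of_mul_pow_three_le {x c h τ w C E : ℝ} (hx : 1 < x)
    (hc : 0 ≤ c) (hcx : c * x ^ 3 ≤ 1 / 2) (hw : x ^ 3 * w ^ 2 ≤ (x ^ 3)⁻¹) (hh : 0 < h)
    (hτ : 0 < τ) (hC : 0 ≤ C) (hτ3 : 16 * C * h⁻¹ ≤ τ ^ 3) (hτh : 4 * C * (τ * h) ≤ E) :
    -E ≤ innerA τ c x - C * innerB h τ c w x := by
  have hx0 : 0 < x := by linarith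
  have hμ : 0 ≤ x ^ 2 - 1 := by nlinarith
  have hK := mul_le_innerDenom_of_mul_pow_three_le hx.le hc hcx hh hτ
  have hA := innerA_ge_of_mul_pow_three_le hx.le hc hcx (τ := τ)
  have hB := mul_innerB_le (w := w) hC ((mul_nonneg (by positivity) hμ).trans hK)
  have hterm (z : ℝ) : 2 * C * (((x ^ 2 - 1) * z) ^ 2 / innerDenom h τ c x) ≤
      2 * C * (x ^ 2 * z ^ 2 / (h⁻¹ * τ * x⁻¹ / 2)) :=
    mul_le_mul_of_nonneg_left (sq_mul_div_le hμ (by linarith) (by positivity) hK) (by positivity)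
  have hB₁ : 2 * C * (((x ^ 2 - 1) * (h⁻¹ * w)) ^ 2 / innerDenom h τ c x) ≤
      τ ^ 2 * (x ^ 3)⁻¹ / 4 :=
    calc _ ≤ 2 * C * (x ^ 2 * (h⁻¹ * w) ^ 2 / (h⁻¹ * τ * x⁻¹ / 2)) := hterm _
      _ = 4 * (C * h⁻¹) * (x ^ 3 * w ^ 2) / τ := by field_simp; ring
      _ ≤ 4 * (C * h⁻¹) * (x ^ 3)⁻¹ / τ := by gcongr
      _ ≤ τ ^ 2 * (x ^ 3)⁻¹ / 4 := by
          rw [div_le_iff₀ hτ]; nlinarith [inv_pos.2 (pow_pos hx0 3)]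
  have hB₂ : 2 * C * (((x ^ 2 - 1) * (τ * (x ^ 2)⁻¹)) ^ 2 / innerDenom h τ c x) ≤ E :=
    calc _ ≤ 2 * C * (x ^ 2 * (τ * (x ^ 2)⁻¹) ^ 2 / (h⁻¹ * τ * x⁻¹ / 2)) := hterm _
      _ = 4 * C * (τ * h) * x⁻¹ := by field_simp; ring
      _ ≤ 4 * C * (τ * h) :=
          mul_le_of_le_one_right (by positivity) (inv_le_one_of_one_le₀ hx.le)
      _ ≤ E := hτh
  nlinarith [inv_pos.2 (pow_pos hx0 3)]

theorem neg_le_innerA_sub_innerB_of_lt_mul_pow_three {x c h τ w C E y : ℝ} (hx : 1 < x)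
    (hcx : c < x⁻¹) (hcx3 : 1 / 2 < c * x ^ 3) (hw : x ^ 3 * w ^ 2 ≤ (x ^ 3)⁻¹) (hh : 0 < h)
    (hτ : 0 < τ) (hC : 0 ≤ C) (hy : c ≤ y ^ 3) (hτc : 2 * τ ^ 2 * c ≤ E / 3)
    (hhc : 2 * C * (h⁻¹ ^ 2 * c) ≤ E / 3) (hτy : 2 * C * (τ ^ 2 * y) ≤ E / 3) :
    -E ≤ innerA τ c x - C * innerB h τ c w x := by
  have hx0 : 0 < x := by linarith
  have hμ : 0 ≤ x ^ 2 - 1 := by nlinarith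
  have hx3 : (x ^ 3)⁻¹ < 2 * c := by
    rw [inv_lt_iff_one_lt_mul₀ (by positivity)]; linarith
  have hK := two_div_mul_le_innerDenom hx hcx hh hτ
  have hA := neg_le_innerA hx0 hcx.le (τ := τ)
  have hB := mul_innerB_le (w := w) hC ((mul_nonneg (by positivity) hμ).trans hK)
  have hterm (z : ℝ) : 2 * C * (((x ^ 2 - 1) * z) ^ 2 / innerDenom h τ c x) ≤
      2 * C * (x ^ 2 * z ^ 2 / (2 / x)) :=
    mul_le_mul_of_nonneg_left (sq_mul_div_le hμ (by linarith) (by positivity) hK) (by positivity)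
  have hB₁ : 2 * C * (((x ^ 2 - 1) * (h⁻¹ * w)) ^ 2 / innerDenom h τ c x) ≤ E / 3 :=
    calc _ ≤ 2 * C * (x ^ 2 * (h⁻¹ * w) ^ 2 / (2 / x)) := hterm _
      _ = C * h⁻¹ ^ 2 * (x ^ 3 * w ^ 2) := by field_simp
      _ ≤ C * h⁻¹ ^ 2 * (x ^ 3)⁻¹ := by gcongr
      _ ≤ C * h⁻¹ ^ 2 * (2 * c) := by gcongr
      _ = 2 * C * (h⁻¹ ^ 2 * c) := by ring
      _ ≤ E / 3 := hhc
  have hy0 : 0 ≤ y := by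
    by_contra! hy0
    linarith [Odd.pow_nonpos (by decide : Odd 3) hy0.le, inv_pos.2 (pow_pos hx0 3)]
  have hxy : x⁻¹ ≤ 2 * y := by
    refine (lt_of_pow_lt_pow_left₀ 3 (by positivity) ?_).le
    rw [inv_pow]
    nlinarith [pow_nonneg hy0 3]
  have hB₂ : 2 * C * (((x ^ 2 - 1) * (τ * (x ^ 2)⁻¹)) ^ 2 / innerDenom h τ c x) ≤ E / 3 :=
    calc _ ≤ 2 * C * (x ^ 2 * (τ * (x ^ 2)⁻¹) ^ 2 / (2 / x)) := hterm _
      _ = C * τ ^ 2 * x⁻¹ := by field_simp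
      _ ≤ C * τ ^ 2 * (2 * y) := by gcongr
      _ = 2 * C * (τ ^ 2 * y) := by ring
      _ ≤ E / 3 := hτy
  linarith

theorem AF_eq_zero_of_lt {s τ a r : ℝ} (hra : a < r) : AF s τ a r = 0 := by
  have : (fun t => muF s a t * phiD τ a t ^ 2) =ᶠ[𝓝 r] fun _ => 0 := by
    filter_upwards [eventually_gt_nhds hra] with t ht
    simp [phiD, not_le.2 ht]
  rw [AF, this.deriv_eq, deriv_const]

theorem AF_eq_innerA_of_lt {s τ a r : ℝ} (hr : -1 < r) (hra : r < a) :
    AF s τ a r = innerA τ (a + 1)⁻¹ (r + 1) := by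
  have hx : r + 1 ≠ 0 := by linarith
  have hloc : (fun t => muF s a t * phiD τ a t ^ 2) =ᶠ[𝓝 r]
      fun t => ((t + 1) ^ 2 - 1) * (τ * ((t + 1)⁻¹ - (a + 1)⁻¹)) ^ 2 := by
    filter_upwards [eventually_lt_nhds hra] with t ht
    simp [muF, phiD, ht.le]
  have hx1 : HasDerivAt (fun t : ℝ => t + 1) 1 r := (hasDerivAt_id r).add_const 1
  have hμ := (hx1.fun_pow 2).sub_const 1
  have hφ := ((hx1.fun_inv hx).sub_const (a + 1)⁻¹).const_mul τ
  rw [AF, hloc.deriv_eq, (hμ.fun_mul (hφ.fun_pow 2)).deriv, innerA]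
  generalize (a + 1)⁻¹ = c
  push_cast
  field_simp
  ring

theorem BF_eq_innerB_of_lt {δ s h τ a r : ℝ} (hτ : 0 ≤ τ) (hra : r < a) :
    BF δ s h τ a r = innerB h τ (a + 1)⁻¹ ((r + 1) ^ (-δ)) (r + 1) := by
  simp [BF, innerB, innerDenom, muF, phiD, phiDD, muD, hra, hra.le, abs_of_nonneg hτ]

theorem pow_three_mul_rpow_neg_sq_le {x δ : ℝ} (hx : 1 ≤ x) (hδ : 3 ≤ δ) :
    x ^ 3 * (x ^ (-δ)) ^ 2 ≤ (x ^ 3)⁻¹ := by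
  have hx0 : 0 < x := by linarith
  have hw : x ^ (-δ) ≤ (x ^ 3)⁻¹ := by
    rw [← Real.rpow_natCast, ← Real.rpow_neg hx0.le]
    exact Real.rpow_le_rpow_of_exponent_le hx (by push_cast; linarith)
  calc x ^ 3 * (x ^ (-δ)) ^ 2 ≤ x ^ 3 * ((x ^ 3)⁻¹) ^ 2 := by gcongr
    _ = (x ^ 3)⁻¹ := by field_simp

theorem AF_sub_BF_ge_of_lt {δ s h τ a r C E y : ℝ} (hr : 0 < r) (hra : r < a) (hδ : 3 ≤ δ)
    (hh : 0 < h) (hτ : 0 < τ) (hC : 0 ≤ C) (hy : (a + 1)⁻¹ ≤ y ^ 3)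
    (hτ3 : 16 * C * h⁻¹ ≤ τ ^ 3) (hτh : 4 * C * (τ * h) ≤ E)
    (hτc : 2 * τ ^ 2 * (a + 1)⁻¹ ≤ E / 3) (hhc : 2 * C * (h⁻¹ ^ 2 * (a + 1)⁻¹) ≤ E / 3)
    (hτy : 2 * C * (τ ^ 2 * y) ≤ E / 3) :
    AF s τ a r - C * BF δ s h τ a r ≥ -(E / 2) * muD s a r := by
  have hx : 1 < r + 1 := by linarith
  have hw := pow_three_mul_rpow_neg_sq_le hx.le hδ
  have hE : 0 ≤ E := le_trans (by positivity) hτh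
  have key : -E ≤ innerA τ (a + 1)⁻¹ (r + 1) -
      C * innerB h τ (a + 1)⁻¹ ((r + 1) ^ (-δ)) (r + 1) := by
    rcases le_or_gt ((a + 1)⁻¹ * (r + 1) ^ 3) (1 / 2) with hsmall | hlarge
    · exact neg_le_innerA_sub_innerB_of_mul_pow_three_le hx (inv_pos.2 (by linarith)).le
        hsmall hw hh hτ hC hτ3 hτh
    · exact neg_le_innerA_sub_innerB_of_lt_mul_pow_three hx
        (inv_strictAnti₀ (by positivity) (by linarith)) hlarge hw hh hτ hC hy hτc hhc hτy
  rw [AF_eq_innerA_of_lt (by linarith) hra, BF_eq_innerB_of_lt hτ.le hra, muD, if_pos hra]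
  nlinarith

theorem muF_sq_le_of_lt {s a r : ℝ} (ha : 0 ≤ a) (hs : 1 / 2 ≤ s) (hra : a < r) :
    muF s a r ^ 2 ≤ ((a + 1) ^ 2) ^ 2 := by
  have hb : 1 ≤ a + 1 := by linarith
  have hbr : (r + 1) ^ (-(2 * s) + 1) ≤ (a + 1) ^ (-(2 * s) + 1) :=
    Real.rpow_le_rpow_of_nonpos (by linarith) (by linarith) (by linarith)
  have hb1 : (a + 1) ^ (-(2 * s) + 1) ≤ 1 :=
    Real.rpow_le_one_of_one_le_of_nonpos hb (by linarith)
  have hr0 : 0 ≤ (r + 1) ^ (-(2 * s) + 1) := Real.rpow_nonneg (by linarith) _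
  rw [muF, if_neg (not_le.2 hra)]
  exact sq_le_sq' (by nlinarith) (by linarith)

theorem rpow_neg_sq_le {x b s δ : ℝ} (hb : 0 < b) (hbx : b ≤ x) (hsδ : 2 * s ≤ δ) :
    (x ^ (-δ)) ^ 2 ≤ b ^ (4 * s - 2 * δ) * (x ^ (-(2 * s))) ^ 2 := by
  have hx : 0 < x := hb.trans_le hbx
  have hsplit : (x ^ (-δ)) ^ 2 = x ^ (4 * s - 2 * δ) * (x ^ (-(2 * s))) ^ 2 := by
    simp only [← Real.rpow_natCast, ← Real.rpow_mul hx.le, ← Real.rpow_add hx]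
    congr 1; push_cast; ring
  rw [hsplit]
  exact mul_le_mul_of_nonneg_right (Real.rpow_le_rpow_of_nonpos hb hbx (by linarith))
    (by positivity)

theorem AF_sub_BF_ge_of_gt {δ s h τ a r C E : ℝ} (ha : 0 ≤ a) (hra : a < r) (hs : 1 / 2 < s)
    (hsδ : 2 * s ≤ δ) (hC : 0 ≤ C)
    (hCh : C * h⁻¹ ^ 2 * (a + 1) ^ (-(2 * (δ - 2 - 2 * s))) ≤ E / 2 * (2 * s - 1) ^ 2) :
    AF s τ a r - C * BF δ s h τ a r ≥ -(E / 2) * muD s a r := by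
  have hb : 0 < a + 1 := by linarith
  have hX : 0 < (r + 1) ^ (-(2 * s)) := Real.rpow_pos_of_pos (by linarith) _
  have hκ : 0 < 2 * s - 1 := by linarith
  have hμD : muD s a r = (2 * s - 1) * (r + 1) ^ (-(2 * s)) := if_neg (by linarith)
  have hBF : BF δ s h τ a r =
      muF s a r ^ 2 * h⁻¹ ^ 2 * ((r + 1) ^ (-δ)) ^ 2 / ((2 * s - 1) * (r + 1) ^ (-(2 * s))) := by
    simp only [BF, phiD, phiDD, if_neg (not_le.2 hra), if_neg (not_lt.2 hra.le), hμD, abs_zero,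
      mul_zero, zero_mul, add_zero, zero_add]
    ring
  have hb4 : ((a + 1) ^ 2) ^ 2 * (a + 1) ^ (4 * s - 2 * δ) =
      (a + 1) ^ (-(2 * (δ - 2 - 2 * s))) := by
    rw [← pow_mul, ← Real.rpow_natCast, ← Real.rpow_add hb]
    congr 1; push_cast; ring
  have hnum : C * (muF s a r ^ 2 * h⁻¹ ^ 2 * ((r + 1) ^ (-δ)) ^ 2) ≤
      E / 2 * (2 * s - 1) ^ 2 * ((r + 1) ^ (-(2 * s))) ^ 2 :=
    calc C * (muF s a r ^ 2 * h⁻¹ ^ 2 * ((r + 1) ^ (-δ)) ^ 2)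
        ≤ C * (((a + 1) ^ 2) ^ 2 * h⁻¹ ^ 2 *
            ((a + 1) ^ (4 * s - 2 * δ) * ((r + 1) ^ (-(2 * s))) ^ 2)) := by
          gcongr C * (?_ * _ * ?_)
          · exact muF_sq_le_of_lt ha hs.le hra
          · exact rpow_neg_sq_le hb (by linarith) hsδ
      _ = C * h⁻¹ ^ 2 * (a + 1) ^ (-(2 * (δ - 2 - 2 * s))) * ((r + 1) ^ (-(2 * s))) ^ 2 := by
          rw [← hb4]; ring
      _ ≤ E / 2 * (2 * s - 1) ^ 2 * ((r + 1) ^ (-(2 * s))) ^ 2 := by gcongr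
  rw [AF_eq_zero_of_lt hra, hBF, hμD, ge_iff_le, zero_sub, neg_mul, neg_le_neg_iff,
    ← mul_div_assoc, div_le_iff₀ (by positivity)]
  linarith

theorem eventually_mul_rpow_le (K : ℝ) {e ε : ℝ} (he : 0 < e) (hε : 0 < ε) :
    ∀ᶠ h in 𝓝[>] (0 : ℝ), K * h ^ e ≤ ε := by
  have : Tendsto (fun h : ℝ => K * h ^ e) (𝓝[>] 0) (𝓝 (K * 0 ^ e)) :=
    (continuousAt_const.mul (Real.continuousAt_rpow_const 0 e (Or.inr he.le))).tendsto.mono_left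
      nhdsWithin_le_nhds
  rw [Real.zero_rpow he.ne', mul_zero] at this
  exact this.eventually_le_const hε

theorem eventually_AF_sub_BF_ge_of_lt {E δ s m C τ₀ : ℝ} (hE : 0 < E) (hδ : 3 ≤ δ) (hm : 2 < m)
    (hC : 0 ≤ C) (hτ₀ : 0 < τ₀) (hτ₀C : 16 * C ≤ τ₀ ^ 3) :
    ∀ᶠ h in 𝓝[>] 0, ∀ r, 0 < r → r < h ^ (-m) →
      AF s (τ₀ * h ^ (-(1 : ℝ) / 3)) (h ^ (-m)) r -
          C * BF δ s h (τ₀ * h ^ (-(1 : ℝ) / 3)) (h ^ (-m)) r ≥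
        -(E / 2) * muD s (h ^ (-m)) r := by
  have hE3 : 0 < E / 3 := by positivity
  filter_upwards [self_mem_nhdsWithin,
    eventually_mul_rpow_le (4 * C * τ₀) (by norm_num : (0 : ℝ) < 2 / 3) hE,
    eventually_mul_rpow_le (2 * τ₀ ^ 2) (by linarith : 0 < m - 2 / 3) hE3,
    eventually_mul_rpow_le (2 * C) (by linarith : 0 < m - 2) hE3,
    eventually_mul_rpow_le (2 * C * τ₀ ^ 2) (by linarith : 0 < m / 3 - 2 / 3) hE3]
    with h (hh : 0 < h) hτh hτc hhc hτy r hr hra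
  have hpow (x y : ℝ) : h ^ x * h ^ y = h ^ (x + y) := (Real.rpow_add hh x y).symm
  have hnat (x : ℝ) (n : ℕ) : (h ^ x) ^ n = h ^ (x * n) := by
    rw [← Real.rpow_natCast, ← Real.rpow_mul hh.le]
  have hc : (h ^ (-m) + 1)⁻¹ ≤ h ^ m := by
    calc (h ^ (-m) + 1)⁻¹ ≤ (h ^ (-m))⁻¹ := inv_anti₀ (by positivity) (by linarith)
      _ = h ^ m := by rw [Real.rpow_neg hh.le, inv_inv]
  have hτ2 : (τ₀ * h ^ (-(1 : ℝ) / 3)) ^ 2 = τ₀ ^ 2 * h ^ (-(2 : ℝ) / 3) := by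
    rw [mul_pow, hnat]; norm_num
  have hτ3 : (τ₀ * h ^ (-(1 : ℝ) / 3)) ^ 3 = τ₀ ^ 3 * h⁻¹ := by
    rw [mul_pow, hnat]; norm_num [Real.rpow_neg_one]
  refine AF_sub_BF_ge_of_lt (y := h ^ (m / 3)) hr hra hδ hh (by positivity) hC ?_ ?_ ?_ ?_ ?_ ?_
  · rw [hnat]; convert hc using 2; push_cast; ring
  · rw [hτ3]; gcongr
  · calc 4 * C * (τ₀ * h ^ (-(1 : ℝ) / 3) * h) = 4 * C * τ₀ * h ^ (-(1 : ℝ) / 3 + 1) := by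
          rw [Real.rpow_add_one hh.ne']; ring
      _ ≤ E := by norm_num; exact hτh
  · calc 2 * (τ₀ * h ^ (-(1 : ℝ) / 3)) ^ 2 * (h ^ (-m) + 1)⁻¹
        = 2 * τ₀ ^ 2 * h ^ (-(2 : ℝ) / 3) * (h ^ (-m) + 1)⁻¹ := by rw [hτ2]; ring
      _ ≤ 2 * τ₀ ^ 2 * h ^ (-(2 : ℝ) / 3) * h ^ m := by gcongr
      _ = 2 * τ₀ ^ 2 * h ^ (m - 2 / 3) := by rw [mul_assoc _ (h ^ _), hpow]; ring_nf
      _ ≤ E / 3 := hτc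
  · calc 2 * C * (h⁻¹ ^ 2 * (h ^ (-m) + 1)⁻¹) ≤ 2 * C * (h ^ (-2 : ℝ) * h ^ m) := by
          rw [Real.rpow_neg hh.le 2, Real.rpow_two, inv_pow]; gcongr
      _ = 2 * C * h ^ (m - 2) := by rw [hpow]; ring_nf
      _ ≤ E / 3 := hhc
  · calc 2 * C * ((τ₀ * h ^ (-(1 : ℝ) / 3)) ^ 2 * h ^ (m / 3))
        = 2 * C * τ₀ ^ 2 * (h ^ (-(2 : ℝ) / 3) * h ^ (m / 3)) := by rw [hτ2]; ring
      _ = 2 * C * τ₀ ^ 2 * h ^ (m / 3 - 2 / 3) := by rw [hpow]; ring_nf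
      _ ≤ E / 3 := hτy

theorem eventually_AF_sub_BF_ge_of_gt {E δ s m C : ℝ} (hE : 0 < E) (hs : 1 / 2 < s)
    (hd : 0 < δ - 2 - 2 * s) (hmd : 1 < m * (δ - 2 - 2 * s)) (hC : 0 ≤ C) :
    ∀ᶠ h in 𝓝[>] 0, ∀ τ r, h ^ (-m) < r →
      AF s τ (h ^ (-m)) r - C * BF δ s h τ (h ^ (-m)) r ≥ -(E / 2) * muD s (h ^ (-m)) r := by
  have hκ : 0 < 2 * s - 1 := by linarith
  filter_upwards [self_mem_nhdsWithin, eventually_mul_rpow_le C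
    (by linarith : 0 < 2 * m * (δ - 2 - 2 * s) - 2) (by positivity : 0 < E / 2 * (2 * s - 1) ^ 2)]
    with h (hh : 0 < h) hCh τ r hra
  have ha : 0 < h ^ (-m) := by positivity
  refine AF_sub_BF_ge_of_gt ha.le hra hs (by linarith) hC ?_
  calc C * h⁻¹ ^ 2 * (h ^ (-m) + 1) ^ (-(2 * (δ - 2 - 2 * s)))
      ≤ C * h⁻¹ ^ 2 * (h ^ (-m)) ^ (-(2 * (δ - 2 - 2 * s))) := by
        gcongr C * h⁻¹ ^ 2 * ?_
        exact Real.rpow_le_rpow_of_nonpos ha (by linarith) (by linarith)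
    _ = C * h ^ (2 * m * (δ - 2 - 2 * s) - 2) := by
        rw [← Real.rpow_mul hh.le, Real.rpow_sub hh, Real.rpow_two]
        field_simp
    _ ≤ E / 2 * (2 * s - 1) ^ 2 := hCh

/-- Lemma 2.3. There is `m₀ > 2` depending only on `δ, s` such that for
every `m ≥ m₀` and every constant `C > 0` there are `τ₀ = τ₀(C) > 0` and `h₀ = h₀(C) > 0`
so that with `τ = τ₀ h^{-1/3}`, for all `0 < h ≤ h₀` and all `r > 0`, `r ≠ a`:
`A(r) - C B(r) ≥ -(E/2) μ'(r)`. -/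
theorem statement6 (E δ s : ℝ) (hE : 0 < E) (hδ : 3 < δ)
    (hs1 : 1 / 2 < s) (hs2 : s < (δ - 2) / 2) :
    ∃ m₀ > (2 : ℝ), ∀ m : ℝ, m₀ ≤ m → ∀ C > (0 : ℝ), ∃ τ₀ > (0 : ℝ), ∃ h₀ > (0 : ℝ),
      ∀ h : ℝ, 0 < h → h ≤ h₀ → ∀ r : ℝ, 0 < r → r ≠ h ^ (-m) →
        AF s (τ₀ * h ^ (-(1 : ℝ) / 3)) (h ^ (-m)) r -
            C * BF δ s h (τ₀ * h ^ (-(1 : ℝ) / 3)) (h ^ (-m)) r ≥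
          -(E / 2) * muD s (h ^ (-m)) r := by
  have hd : 0 < δ - 2 - 2 * s := by linarith
  have hd' : 0 < 1 / (δ - 2 - 2 * s) := by positivity
  refine ⟨2 + 1 / (δ - 2 - 2 * s), by linarith, fun m hm C hC => ?_⟩
  have hmd : 1 < m * (δ - 2 - 2 * s) := by
    have hm₀d : (2 + 1 / (δ - 2 - 2 * s)) * (δ - 2 - 2 * s) ≤ m * (δ - 2 - 2 * s) := by gcongr
    rw [add_mul, one_div_mul_cancel hd.ne'] at hm₀d
    linarith
  have hτ₀ : 16 * C ≤ (16 * C + 1) ^ 3 :=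
    (lt_add_one _).le.trans (le_self_pow₀ (by linarith) (by norm_num))
  obtain ⟨h₀, hh₀, hsmall⟩ := mem_nhdsGT_iff_exists_Ioc_subset.1
    ((eventually_AF_sub_BF_ge_of_lt (m := m) (s := s) hE hδ.le (by linarith) hC.le
        (by positivity) hτ₀).and (eventually_AF_sub_BF_ge_of_gt hE hs1 hd hmd hC.le))
  refine ⟨16 * C + 1, by positivity, h₀, hh₀, fun h hh hhh r hr hra => ?_⟩
  obtain ⟨hinner, houter⟩ := hsmall ⟨hh, hhh⟩
  rcases hra.lt_or_gt with hlt | hgt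
  · exact hinner r hr hlt
  · exact houter _ r hgt
end

section
/- Suppose m > 2. There exists a constant C > 0, independent of h, τ₀ and r, such that for all sufficiently small h > 0 and all 0 < r < a, one has A(r) ≥ 2τ(r+1)^{−2} φ'(r) − C h μ'(r). (More precisely, for 0 < r < a one has A(r) ≥ 2τ(r+1)^{−2}φ'(r) − τ² a^{−1} μ'(r), and τ² a^{−1} = τ₀² h^{m − 2/3} ≤ C h when m > 2 and h is small.) -/
open Real

/-!
On `r < a` both `μ` and `φ'` are smooth, so `A = μ'φ'² + 2μφ'φ''`. With
`c = (r+1)⁻¹ - (a+1)⁻¹` this gives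
`A - (2τ(r+1)⁻²φ' - τ²a⁻¹μ') = 2τ²(r+1)(a⁻¹ - c/(a+1))`, which is nonnegative because
`c ≤ 1` for `r ≥ 0`. For the second bound, `τ²a⁻¹ = τ₀²h^(m-2/3) ≤ h` as soon as
`h ≤ τ₀⁻⁶` and `m ≥ 2`.
-/

lemma hasDerivAt_muF {s a r : ℝ} (hra : r < a) : HasDerivAt (muF s a) (muD s a r) r := by
  have hev : (fun t => (t + 1) ^ 2 - 1) =ᶠ[nhds r] muF s a := by
    filter_upwards [Iio_mem_nhds hra] with t ht
    simp [muF, (Set.mem_Iio.mp ht).le]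
  have hpoly : HasDerivAt (fun t : ℝ => (t + 1) ^ 2 - 1) (2 * (r + 1)) r := by
    simpa using (((hasDerivAt_id r).add_const 1).pow 2).sub_const 1
  simpa [muD, hra] using hpoly.congr_of_eventuallyEq hev.symm

lemma hasDerivAt_phiD {τ a r : ℝ} (hr : -1 < r) (hra : r < a) :
    HasDerivAt (phiD τ a) (phiDD τ a r) r := by
  have hev : (fun t => τ * ((t + 1)⁻¹ - (a + 1)⁻¹)) =ᶠ[nhds r] phiD τ a := by
    filter_upwards [Iio_mem_nhds hra] with t ht
    simp [phiD, (Set.mem_Iio.mp ht).le]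
  have hinv : HasDerivAt (fun t : ℝ => τ * ((t + 1)⁻¹ - (a + 1)⁻¹))
      (τ * (-1 / (r + 1) ^ 2)) r :=
    ((((hasDerivAt_id r).add_const 1).inv (by simp; linarith)).sub_const _).const_mul τ
  have hpow : (r + 1) ^ (-(2 : ℝ)) = ((r + 1) ^ 2)⁻¹ := by
    rw [rpow_neg (by linarith), rpow_two]
  refine (hinv.congr_of_eventuallyEq hev.symm).congr_deriv ?_
  simp only [phiDD, if_pos hra, hpow]
  ring

lemma AF_eq {s τ a r : ℝ} (hr : -1 < r) (hra : r < a) :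
    AF s τ a r = muD s a r * phiD τ a r ^ 2 + 2 * muF s a r * phiD τ a r * phiDD τ a r := by
  have h : HasDerivAt (fun t => muF s a t * phiD τ a t ^ 2) _ r :=
    (hasDerivAt_muF hra).mul ((hasDerivAt_phiD hr hra).pow 2)
  rw [AF, h.deriv]
  ring

lemma AF_ge {s τ a r : ℝ} (ha : 0 < a) (hr : 0 ≤ r) (hra : r < a) :
    2 * τ * (r + 1) ^ (-(2 : ℝ)) * phiD τ a r - τ ^ 2 * a⁻¹ * muD s a r ≤ AF s τ a r := by
  have hr1 : (0 : ℝ) < r + 1 := by linarith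
  set c := (r + 1)⁻¹ - (a + 1)⁻¹ with hc
  have hc1 : c ≤ 1 := by
    have : (r + 1)⁻¹ ≤ 1 := inv_le_one_of_one_le₀ (by linarith)
    have : 0 < (a + 1)⁻¹ := by positivity
    linarith
  have hgap : c / (a + 1) ≤ a⁻¹ := by
    rw [div_le_iff₀ (by linarith), inv_mul_eq_div, le_div_iff₀ ha]
    nlinarith
  have hpow : (r + 1) ^ (-(2 : ℝ)) = ((r + 1) ^ 2)⁻¹ := by
    rw [rpow_neg hr1.le, rpow_two]
  have hdiff : AF s τ a r - (2 * τ * (r + 1) ^ (-(2 : ℝ)) * phiD τ a r - τ ^ 2 * a⁻¹ * muD s a r)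
      = 2 * τ ^ 2 * (r + 1) * (a⁻¹ - c / (a + 1)) := by
    rw [AF_eq (by linarith) hra]
    simp only [muD, muF, phiD, phiDD, if_pos hra, if_pos hra.le, hpow, hc]
    field_simp
    ring
  have : 0 ≤ 2 * τ ^ 2 * (r + 1) * (a⁻¹ - c / (a + 1)) := by
    have := sub_nonneg.mpr hgap
    positivity
  linarith

lemma sq_mul_rpow_neg_inv_le_self {m τ₀ h : ℝ} (hm : 2 ≤ m) (hτ₀ : 1 ≤ τ₀) (hh : 0 < h)
    (hh₀ : h ≤ τ₀⁻¹ ^ 6) :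
    (τ₀ * h ^ (-(1 : ℝ) / 3)) ^ 2 * (h ^ (-m))⁻¹ ≤ h := by
  have hτ0 : 0 < τ₀ := by linarith
  have hh1 : h ≤ 1 := hh₀.trans (pow_le_one₀ (by positivity) (inv_le_one_of_one_le₀ hτ₀))
  have hsmall : h ^ (m - 5 / 3) ≤ τ₀⁻¹ ^ 2 :=
    calc h ^ (m - 5 / 3) ≤ h ^ ((1 : ℝ) / 3) := rpow_le_rpow_of_exponent_ge hh hh1 (by linarith)
      _ ≤ (τ₀⁻¹ ^ 6) ^ ((1 : ℝ) / 3) := rpow_le_rpow hh.le hh₀ (by norm_num)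
      _ = τ₀⁻¹ ^ 2 := by
        rw [← rpow_natCast τ₀⁻¹ 6, ← rpow_natCast τ₀⁻¹ 2, ← rpow_mul (by positivity)]
        norm_num
  have hsplit : (τ₀ * h ^ (-(1 : ℝ) / 3)) ^ 2 * (h ^ (-m))⁻¹ = τ₀ ^ 2 * h ^ (m - 5 / 3) * h := by
    rw [mul_pow, ← rpow_natCast (h ^ _), ← rpow_mul hh.le, ← rpow_neg hh.le, neg_neg,
      mul_assoc, mul_assoc, ← rpow_add hh, ← rpow_add_one hh.ne']
    ring_nf
  calc (τ₀ * h ^ (-(1 : ℝ) / 3)) ^ 2 * (h ^ (-m))⁻¹ = τ₀ ^ 2 * h ^ (m - 5 / 3) * h := hsplit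
    _ ≤ τ₀ ^ 2 * τ₀⁻¹ ^ 2 * h := by gcongr
    _ = h := by field_simp

/-- For `m > 2`, on `0 < r < a` (with `a = h^{-m}`, `τ = τ₀ h^{-1/3}`):
(i) the precise bound `A(r) ≥ 2τ(r+1)^{-2} φ'(r) - τ² a⁻¹ μ'(r)`;
(ii) there is `C > 0` (independent of `h`, `τ₀`, `r`) such that for every `τ₀ ≥ 1` and all
sufficiently small `h`, `A(r) ≥ 2τ(r+1)^{-2} φ'(r) - C h μ'(r)`. -/
theorem statement7 (m s : ℝ) (hm : 2 < m) :
    (∀ h τ₀ : ℝ, 0 < h → h < 1 → 1 ≤ τ₀ → ∀ r : ℝ, 0 < r → r < h ^ (-m) →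
      AF s (τ₀ * h ^ (-(1 : ℝ) / 3)) (h ^ (-m)) r ≥
        2 * (τ₀ * h ^ (-(1 : ℝ) / 3)) * (r + 1) ^ (-(2 : ℝ)) *
            phiD (τ₀ * h ^ (-(1 : ℝ) / 3)) (h ^ (-m)) r -
          (τ₀ * h ^ (-(1 : ℝ) / 3)) ^ 2 * (h ^ (-m))⁻¹ * muD s (h ^ (-m)) r) ∧
    (∃ C > (0 : ℝ), ∀ τ₀ : ℝ, 1 ≤ τ₀ → ∃ h₀ > (0 : ℝ), ∀ h : ℝ, 0 < h → h ≤ h₀ →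
      ∀ r : ℝ, 0 < r → r < h ^ (-m) →
        AF s (τ₀ * h ^ (-(1 : ℝ) / 3)) (h ^ (-m)) r ≥
          2 * (τ₀ * h ^ (-(1 : ℝ) / 3)) * (r + 1) ^ (-(2 : ℝ)) *
              phiD (τ₀ * h ^ (-(1 : ℝ) / 3)) (h ^ (-m)) r -
            C * h * muD s (h ^ (-m)) r) := by
  refine ⟨fun h τ₀ hh _ _ r hr0 hra => AF_ge (rpow_pos_of_pos hh _) hr0.le hra,
    1, one_pos, fun τ₀ hτ₀ => ⟨τ₀⁻¹ ^ 6, by positivity, fun h hh hh₀ r hr0 hra => ?_⟩⟩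
  have hμ' : 0 ≤ muD s (h ^ (-m)) r := by
    rw [muD, if_pos hra]
    linarith
  refine le_trans ?_ (AF_ge (rpow_pos_of_pos hh _) hr0.le hra)
  rw [one_mul]
  gcongr
  exact sq_mul_rpow_neg_inv_le_self hm.le hτ₀ hh hh₀
end

section
/- Fix δ > 3 and s with 1/2 < s < (δ−2)/2. There exists a constant C > 0, independent of h, τ₀ and r, such that for a/2 < r < a one has B(r) ≤ C (h^{−2} a^{2−2δ} + τ² a^{−2}) μ'(r). Consequently, if m is chosen large enough (depending only on δ), then B(r) ≤ C' h μ'(r) for a/2 < r < a and all sufficiently small h > 0. -/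
open Real

set_option maxHeartbeats 1000000 in
lemma key (δ s τ h a r : ℝ) (hδ : 3 < δ) (hh : 0 < h) (hτ : 0 < τ)
    (ha : 1 < a) (hr1 : a / 2 < r) (hr2 : r < a) :
    BF δ s h τ a r ≤ 32 * ((2:ℝ) ^ δ) ^ 2 *
      (h ^ (-(2:ℝ)) * a ^ (2 - 2 * δ) + τ ^ 2 * a ^ (-(2:ℝ))) * muD s a r := by
  have ha0 : (0:ℝ) < a := by linarith
  have hr0 : (0:ℝ) < r := by linarith
  have hx : (1:ℝ) < r + 1 := by linarith
  have hx0 : (0:ℝ) < r + 1 := by linarith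
  set c : ℝ := (2:ℝ) ^ δ with hc
  have hc1 : (1:ℝ) ≤ c := by
    rw [hc, show (1:ℝ) = (2:ℝ) ^ (0:ℝ) by simp]
    exact rpow_le_rpow_of_exponent_le one_le_two (by linarith)
  set H : ℝ := h⁻¹ with hH
  have hH0 : 0 < H := inv_pos.mpr hh
  set P : ℝ := (r + 1) ^ (-δ) with hP
  set Q : ℝ := a ^ (-δ) with hQ
  have hP0 : 0 < P := rpow_pos_of_pos hx0 _
  have hQ0 : 0 < Q := rpow_pos_of_pos ha0 _
  have hPQ : P ≤ c * Q := by
    have h1 : P ≤ (a / 2) ^ (-δ) :=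
      rpow_le_rpow_of_nonpos (by linarith) (by linarith) (by linarith)
    have h2 : (a / 2) ^ (-δ) = c * Q := by
      rw [hc, hQ, div_rpow ha0.le (by norm_num), rpow_neg (by norm_num : (0:ℝ) ≤ 2),
        div_eq_mul_inv, inv_inv]
      ring
    linarith only [h1, h2]
  have hy : (r + 1) ^ (-(2:ℝ)) = ((r+1)^2)⁻¹ := by
    rw [rpow_neg hx0.le, show ((2:ℝ) = ((2:ℕ):ℝ)) by norm_num, rpow_natCast]
  have hz : a ^ (-(2:ℝ)) = (a^2)⁻¹ := by
    rw [rpow_neg ha0.le, show ((2:ℝ) = ((2:ℕ):ℝ)) by norm_num, rpow_natCast]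
  have hh2 : h ^ (-(2:ℝ)) = H * H := by
    rw [rpow_neg hh.le, show ((2:ℝ) = ((2:ℕ):ℝ)) by norm_num, rpow_natCast, hH, sq,
      mul_inv]
  have ha2 : a ^ (2 - 2*δ) = a^2 * (Q * Q) := by
    rw [show (2 - 2*δ) = ((2:ℕ):ℝ) + (-δ + -δ) by push_cast; ring, rpow_add ha0,
      rpow_add ha0, rpow_natCast, hQ]
  have hmu : muF s a r = (r+1)^2 - 1 := if_pos hr2.le
  have hmuD : muD s a r = 2 * (r+1) := if_pos hr2
  have hphiD : phiD τ a r = τ * ((r+1)⁻¹ - (a+1)⁻¹) := if_pos hr2.le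
  have habs : |phiDD τ a r| = τ * ((r+1)^2)⁻¹ := by
    rw [phiDD, if_pos hr2, hy, neg_mul, abs_neg, abs_of_nonneg (by positivity)]
  have hmu0 : 0 ≤ muF s a r := by
    rw [hmu]; nlinarith only [hr0, sq_nonneg r]
  have hphiD0 : 0 ≤ phiD τ a r := by
    rw [hphiD]
    have hinv : (a+1)⁻¹ ≤ (r+1)⁻¹ := inv_anti₀ hx0 (by linarith)
    exact mul_nonneg hτ.le (by linarith only [hinv])
  have hmuD0 : 0 < muD s a r := by rw [hmuD]; linarith
  set N : ℝ := muF s a r * (H * P + |phiDD τ a r|) with hN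
  have hden : muD s a r ≤ H * phiD τ a r * muF s a r + muD s a r := by
    have := mul_nonneg (mul_nonneg hH0.le hphiD0) hmu0
    linarith only [this]
  have step1 : BF δ s h τ a r ≤ N ^ 2 / muD s a r := by
    rw [BF, hN, hH, hP]
    exact div_le_div_of_nonneg_left (sq_nonneg _) hmuD0 (by rw [hH] at hden; exact hden)
  refine step1.trans ?_
  rw [div_le_iff₀ hmuD0]
  rw [hN, hmu, habs, hmuD, hh2, ha2, hz]
  set x : ℝ := r + 1 with hxdef
  have hxa : x ≤ 2 * a := by rw [hxdef]; linarith
  have hax : a ≤ 2 * x := by rw [hxdef]; linarith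
  have hx21 : (0:ℝ) ≤ x^2 - 1 := by
    have hx1 : (1:ℝ) ≤ x := hx.le
    nlinarith only [hx1, sq_nonneg (x - 1)]
  have hK : (x^2 - 1) * (H * P + τ * (x^2)⁻¹) ≤ 4 * c * H * a^2 * Q + τ := by
    have e1 : (x^2 - 1) * (H * P) ≤ 4 * c * H * a^2 * Q := by
      have hx2 : x^2 ≤ 4 * a^2 := by
        calc x^2 ≤ (2*a)^2 := pow_le_pow_left₀ hx0.le hxa 2
          _ = 4 * a^2 := by ring
      have e1a : P * (x^2 - 1) ≤ (c * Q) * (4 * a^2) := by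
        apply mul_le_mul hPQ (by linarith only [hx2]) hx21 (by positivity)
      have e1b := mul_le_mul_of_nonneg_left e1a hH0.le
      nlinarith only [e1b]
    have e2 : (x^2 - 1) * (τ * (x^2)⁻¹) ≤ τ := by
      have hxx : (0:ℝ) < x^2 := by positivity
      have h3 : (x^2 - 1) * (x^2)⁻¹ ≤ 1 := by
        rw [← div_eq_mul_inv, div_le_one hxx]; linarith only []
      have h4 := mul_le_mul_of_nonneg_left h3 hτ.le
      nlinarith only [h4]
    calc (x^2 - 1) * (H * P + τ * (x^2)⁻¹)
        = (x^2 - 1) * (H * P) + (x^2 - 1) * (τ * (x^2)⁻¹) := by ring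
      _ ≤ 4 * c * H * a^2 * Q + τ := add_le_add e1 e2
  have hKsq : ((x^2 - 1) * (H * P + τ * (x^2)⁻¹)) ^ 2 ≤ (4 * c * H * a^2 * Q + τ) ^ 2 := by
    have h0 : 0 ≤ (x^2 - 1) * (H * P + τ * (x^2)⁻¹) := by
      have hh1 : (0:ℝ) ≤ H * P + τ * (x^2)⁻¹ := by positivity
      exact mul_nonneg hx21 hh1
    exact pow_le_pow_left₀ h0 hK 2
  refine hKsq.trans ?_
  have hzeq : (a^2)⁻¹ * a^2 = 1 := inv_mul_cancel₀ (by positivity)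
  have hmid : (4 * c * H * a^2 * Q + τ) ^ 2 ≤
      32 * c ^ 2 * (H * H * (a^2 * (Q*Q)) + τ^2 * (a^2)⁻¹) * a^2 := by
    have expand : 32 * c ^ 2 * (H * H * (a^2 * (Q*Q)) + τ^2 * (a^2)⁻¹) * a^2
        = 32 * c^2 * H^2 * a^4 * Q^2 + 32 * c^2 * τ^2 := by
      linear_combination (32*c^2*τ^2) * hzeq
    rw [expand]
    have h32 : (0:ℝ) ≤ (32 * c^2 - 2) * τ^2 := by
      have hcc : (1:ℝ) ≤ c^2 := by nlinarith only [hc1, sq_nonneg (c-1)]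
      have := sq_nonneg τ
      nlinarith only [hcc, this]
    nlinarith only [sq_nonneg (4 * c * H * a^2 * Q - τ), h32]
  refine hmid.trans ?_
  have hE0 : 0 ≤ 32 * c ^ 2 * (H * H * (a^2 * (Q*Q)) + τ^2 * (a^2)⁻¹) := by positivity
  have haxx : a^2 ≤ 2 * x * (2 * x) := by
    have h5 : a * a ≤ (2*x) * (2*x) :=
      mul_le_mul hax hax ha0.le (by linarith only [hax, ha0])
    nlinarith only [h5]
  calc 32 * c ^ 2 * (H * H * (a^2 * (Q*Q)) + τ^2 * (a^2)⁻¹) * a^2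
      ≤ 32 * c ^ 2 * (H * H * (a^2 * (Q*Q)) + τ^2 * (a^2)⁻¹) * (2 * x * (2 * x)) :=
        mul_le_mul_of_nonneg_left haxx hE0
    _ = 32 * c ^ 2 * (H * H * (a^2 * (Q*Q)) + τ^2 * (a^2)⁻¹) * (2 * x) * (2 * x) := by ring


set_option maxHeartbeats 1000000 in
/-- For `δ > 3`, `1/2 < s < (δ-2)/2` (with `a = h^{-m}`, `τ = τ₀ h^{-1/3}`):
(i) there is `C > 0` independent of `h`, `τ₀`, `r` such that for `a/2 < r < a`,
`B(r) ≤ C (h^{-2} a^{2-2δ} + τ² a^{-2}) μ'(r)`;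
(ii) if `m` is large enough (depending only on `δ`), then `B(r) ≤ C' h μ'(r)` for
`a/2 < r < a` and all sufficiently small `h`. -/
theorem statement10 (δ s : ℝ) (hδ : 3 < δ) (hs1 : 1 / 2 < s) (hs2 : s < (δ - 2) / 2) :
    (∃ C > (0 : ℝ), ∀ h m τ₀ : ℝ, 0 < h → h < 1 → 0 < m → 1 ≤ τ₀ →
      ∀ r : ℝ, h ^ (-m) / 2 < r → r < h ^ (-m) →
        BF δ s h (τ₀ * h ^ (-(1 : ℝ) / 3)) (h ^ (-m)) r ≤
          C * (h ^ (-(2 : ℝ)) * (h ^ (-m)) ^ (2 - 2 * δ) +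
              (τ₀ * h ^ (-(1 : ℝ) / 3)) ^ 2 * (h ^ (-m)) ^ (-(2 : ℝ))) *
            muD s (h ^ (-m)) r) ∧
    (∃ m₀ > (0 : ℝ), ∀ m : ℝ, m₀ ≤ m → ∃ C' > (0 : ℝ), ∀ τ₀ : ℝ, 1 ≤ τ₀ →
      ∃ h₀ > (0 : ℝ), ∀ h : ℝ, 0 < h → h ≤ h₀ →
        ∀ r : ℝ, h ^ (-m) / 2 < r → r < h ^ (-m) →
          BF δ s h (τ₀ * h ^ (-(1 : ℝ) / 3)) (h ^ (-m)) r ≤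
            C' * h * muD s (h ^ (-m)) r) := by
  constructor
  · refine ⟨32 * ((2:ℝ) ^ δ) ^ 2, by positivity, ?_⟩
    intro h m τ₀ hh hh1 hm hτ₀ r hr1 hr2
    have ha : 1 < h ^ (-m) :=
      (one_lt_rpow_iff_of_pos hh).mpr (Or.inr ⟨hh1, by linarith⟩)
    have hτ : 0 < τ₀ * h ^ (-(1:ℝ)/3) :=
      mul_pos (by linarith) (rpow_pos_of_pos hh _)
    exact key δ s _ h _ r hδ hh hτ ha hr1 hr2
  · refine ⟨1, one_pos, ?_⟩
    intro m hm
    refine ⟨64 * ((2:ℝ) ^ δ) ^ 2, by positivity, ?_⟩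
    intro τ₀ hτ₀
    have hτ₀0 : (0:ℝ) < τ₀ := by linarith
    refine ⟨min (1/2) (τ₀ ^ (-(6:ℝ))), lt_min (by norm_num) (rpow_pos_of_pos hτ₀0 _), ?_⟩
    intro h hh hhle r hr1 hr2
    have hhalf : h ≤ 1/2 := hhle.trans (min_le_left _ _)
    have hh6 : h ≤ τ₀ ^ (-(6:ℝ)) := hhle.trans (min_le_right _ _)
    have hh1 : h < 1 := by linarith
    have ha : 1 < h ^ (-m) :=
      (one_lt_rpow_iff_of_pos hh).mpr (Or.inr ⟨hh1, by linarith⟩)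
    have hτ : 0 < τ₀ * h ^ (-(1:ℝ)/3) :=
      mul_pos hτ₀0 (rpow_pos_of_pos hh _)
    have B1 := key δ s _ h _ r hδ hh hτ ha hr1 hr2
    have hmuD0 : 0 ≤ muD s (h ^ (-m)) r := by
      rw [muD, if_pos hr2]
      have : (0:ℝ) < r := by nlinarith only [hr1, ha]
      linarith
    -- bound the two terms of E by h
    have t1 : h ^ (-(2:ℝ)) * (h ^ (-m)) ^ (2 - 2*δ) ≤ h := by
      have e1 : h ^ (-(2:ℝ)) * (h ^ (-m)) ^ (2 - 2*δ) = h ^ (-(2:ℝ) + (-m)*(2-2*δ)) := by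
        rw [Real.rpow_add hh, Real.rpow_mul hh.le]
      rw [e1]
      have hexp : (1:ℝ) ≤ -(2:ℝ) + (-m)*(2-2*δ) := by
        nlinarith only [hm, hδ, mul_nonneg (sub_nonneg.mpr hm) (by linarith : (0:ℝ) ≤ 2*δ - 2)]
      calc h ^ (-(2:ℝ) + (-m)*(2-2*δ)) ≤ h ^ (1:ℝ) :=
            rpow_le_rpow_of_exponent_ge hh (by linarith) hexp
        _ = h := rpow_one h
    have t2 : (τ₀ * h ^ (-(1:ℝ)/3)) ^ 2 * (h ^ (-m)) ^ (-(2:ℝ)) ≤ h := by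
      have sq13 : (h ^ (-(1:ℝ)/3)) ^ 2 = h ^ (-(2:ℝ)/3) := by
        rw [sq, ← Real.rpow_add hh]; norm_num
      have e2 : (τ₀ * h ^ (-(1:ℝ)/3)) ^ 2 * (h ^ (-m)) ^ (-(2:ℝ))
          = τ₀ ^ 2 * h ^ (2*m - 2/3) := by
        rw [mul_pow, sq13, ← Real.rpow_mul hh.le, mul_assoc, ← Real.rpow_add hh,
          show (-(2:ℝ)/3 + -m * -(2:ℝ)) = 2*m - 2/3 by ring]
      rw [e2]
      have s1 : h ^ (2*m - 2/3) ≤ h * h ^ ((1:ℝ)/3) := by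
        calc h ^ (2*m - 2/3) ≤ h ^ ((4:ℝ)/3) :=
              rpow_le_rpow_of_exponent_ge hh (by linarith) (by linarith)
          _ = h * h ^ ((1:ℝ)/3) := by
              rw [show ((4:ℝ)/3) = 1 + 1/3 by norm_num, Real.rpow_add hh, rpow_one]
      have s2 : h ^ ((1:ℝ)/3) ≤ (τ₀ ^ 2)⁻¹ := by
        calc h ^ ((1:ℝ)/3) ≤ (τ₀ ^ (-(6:ℝ))) ^ ((1:ℝ)/3) :=
              rpow_le_rpow hh.le hh6 (by norm_num)
          _ = τ₀ ^ (-(2:ℝ)) := by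
              rw [← Real.rpow_mul hτ₀0.le]; norm_num
          _ = (τ₀ ^ 2)⁻¹ := by
              rw [rpow_neg hτ₀0.le, show ((2:ℝ) = ((2:ℕ):ℝ)) by norm_num, rpow_natCast]
      have s3 : h * h ^ ((1:ℝ)/3) ≤ h * (τ₀ ^ 2)⁻¹ :=
        mul_le_mul_of_nonneg_left s2 hh.le
      have s4 : τ₀ ^ 2 * (h * (τ₀ ^ 2)⁻¹) = h := by
        field_simp
      calc τ₀ ^ 2 * h ^ (2*m - 2/3) ≤ τ₀ ^ 2 * (h * (τ₀ ^ 2)⁻¹) := by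
            have := s1.trans s3
            exact mul_le_mul_of_nonneg_left this (by positivity)
        _ = h := s4
    have hE : h ^ (-(2:ℝ)) * (h ^ (-m)) ^ (2 - 2*δ) +
        (τ₀ * h ^ (-(1:ℝ)/3)) ^ 2 * (h ^ (-m)) ^ (-(2:ℝ)) ≤ 2 * h := by
      linarith only [t1, t2]
    refine B1.trans ?_
    have hC0 : (0:ℝ) ≤ 32 * ((2:ℝ) ^ δ) ^ 2 := by positivity
    calc 32 * ((2:ℝ) ^ δ) ^ 2 *
          (h ^ (-(2:ℝ)) * (h ^ (-m)) ^ (2 - 2*δ) +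
            (τ₀ * h ^ (-(1:ℝ)/3)) ^ 2 * (h ^ (-m)) ^ (-(2:ℝ))) * muD s (h ^ (-m)) r
        ≤ 32 * ((2:ℝ) ^ δ) ^ 2 * (2 * h) * muD s (h ^ (-m)) r := by
          exact mul_le_mul_of_nonneg_right (mul_le_mul_of_nonneg_left hE hC0) hmuD0
      _ = 64 * ((2:ℝ) ^ δ) ^ 2 * h * muD s (h ^ (-m)) r := by ring
end
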